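/- Let A be an index set and for each x ∈ A let V_x and W_x be real Banach spaces, let r > 0, and let f_x : B_{V_x}(0,r) → W_x be a map which is Fréchet differentiable at every point v of the open ball B_{V_x}(0,r), with derivative denoted Df_x(v) ∈ L(V_x, W_x). Assume there are constants C₁, C₂, C₃ > 0, independent of x, such that: (1) for every x ∈ A and every w ∈ W_x there exists h ∈ V_x with Df_x(0)h = w and ‖h‖_{V_x} ≤ C₁‖w‖_{W_x}; (2) ‖f_x(v+h) − f_x(v) − Df_x(v)h‖_{W_x} ≤ C₂‖h‖²_{V_x} for all x ∈ A and all v, v+h ∈ B_{V_x}(0,r); (3) ‖Df_x(v+h) − Df_x(v)‖_{L(V_x,W_x)} ≤ C₃‖h‖_{V_x} for all x ∈ A and all v, v+h ∈ B_{V_x}(0,r). Then there exist ε > 0 and C > 0 such that for every x ∈ A and every δf ∈ W_x with ‖δf‖_{W_x} < ε there exists δx ∈ B_{V_x}(0,r) with f_x(δx) − f_x(0) = δf and ‖δx‖_{V_x} ≤ C‖δf‖_{W_x}. -/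
import Mathlib


set_option maxHeartbeats 1000000 in
/-- Uniform local invertibility: a family of maps between families of Banach spaces,
with uniformly bounded right inverses of the derivatives at the origin, a uniform
quadratic Taylor estimate and a uniform Lipschitz estimate on the derivatives,
is uniformly locally surjective near the origin, with a uniform bound on solutions. -/
theorem uniform_local_invertibility {A : Type*} (V W : A → Type*)
    [∀ x, NormedAddCommGroup (V x)] [∀ x, NormedSpace ℝ (V x)] [∀ x, CompleteSpace (V x)]
    [∀ x, NormedAddCommGroup (W x)] [∀ x, NormedSpace ℝ (W x)] [∀ x, CompleteSpace (W x)]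
    (r : ℝ) (hr : 0 < r)
    (f : ∀ x, V x → W x) (Df : ∀ x, V x → (V x →L[ℝ] W x))
    (hdiff : ∀ x, ∀ v ∈ Metric.ball (0 : V x) r, HasFDerivAt (f x) (Df x v) v)
    (C₁ C₂ C₃ : ℝ) (hC₁ : 0 < C₁) (hC₂ : 0 < C₂) (hC₃ : 0 < C₃)
    (h1 : ∀ x, ∀ w : W x, ∃ h : V x, Df x 0 h = w ∧ ‖h‖ ≤ C₁ * ‖w‖)
    (h2 : ∀ x, ∀ v h : V x, v ∈ Metric.ball (0 : V x) r → v + h ∈ Metric.ball (0 : V x) r →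
      ‖f x (v + h) - f x v - Df x v h‖ ≤ C₂ * ‖h‖ ^ 2)
    (h3 : ∀ x, ∀ v h : V x, v ∈ Metric.ball (0 : V x) r → v + h ∈ Metric.ball (0 : V x) r →
      ‖Df x (v + h) - Df x v‖ ≤ C₃ * ‖h‖) :
    ∃ ε > 0, ∃ C > 0, ∀ x, ∀ δf : W x, ‖δf‖ < ε →
      ∃ δx : V x, δx ∈ Metric.ball (0 : V x) r ∧
        f x δx - f x 0 = δf ∧ ‖δx‖ ≤ C * ‖δf‖ := by
  have hden : 0 < 2 * C₁ ^ 2 * (C₂ + 2 * C₃) := by positivity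
  refine ⟨min (r / (4 * C₁)) (1 / (2 * C₁ ^ 2 * (C₂ + 2 * C₃))),
    lt_min (by positivity) (by positivity), 2 * C₁, by positivity, fun x δf hδf => ?_⟩
  have hδf1 : ‖δf‖ < r / (4 * C₁) := lt_of_lt_of_le hδf (min_le_left _ _)
  have hδf2 : ‖δf‖ ≤ 1 / (2 * C₁ ^ 2 * (C₂ + 2 * C₃)) :=
    le_of_lt (lt_of_lt_of_le hδf (min_le_right _ _))
  have hδf2' : C₁ ^ 2 * (C₂ + 2 * C₃) * ‖δf‖ ≤ 1 / 2 := by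
    rw [le_div_iff₀ hden] at hδf2; nlinarith
  have hrr : 2 * C₁ * ‖δf‖ < r / 2 := by
    rw [lt_div_iff₀ (by positivity : (0:ℝ) < 4 * C₁)] at hδf1; nlinarith
  choose g hg1 hg2 using h1 x
  -- the Newton-type iteration
  obtain ⟨v, hv0, hvs⟩ : ∃ v : ℕ → V x, v 0 = 0 ∧
      ∀ n, v (n + 1) = v n + g (δf - (f x (v n) - f x 0)) :=
    ⟨fun n => Nat.rec (0 : V x) (fun _ vn => vn + g (δf - (f x vn - f x 0))) n,
      rfl, fun n => rfl⟩
  set e : ℕ → ℝ := fun n => ‖δf - (f x (v n) - f x 0)‖ with he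
  have key : ∀ n, e n ≤ ‖δf‖ * (1 / 2) ^ n ∧
      ‖v n‖ ≤ 2 * C₁ * ‖δf‖ * (1 - (1 / 2) ^ n) := by
    intro n
    induction n with
    | zero => constructor <;> simp [he, hv0]
    | succ n ih =>
      obtain ⟨ihe, ihv⟩ := ih
      have hen : e n ≤ ‖δf‖ := by
        refine ihe.trans ?_
        have : ((1:ℝ)/2) ^ n ≤ 1 := pow_le_one₀ (by norm_num) (by norm_num)
        nlinarith [norm_nonneg δf]
      have hvn : ‖v n‖ ≤ 2 * C₁ * ‖δf‖ := by
        have h0 : (0:ℝ) ≤ (1/2) ^ n := by positivity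
        nlinarith [mul_nonneg (mul_nonneg (mul_nonneg (by norm_num : (0:ℝ) ≤ 2) hC₁.le)
          (norm_nonneg δf)) h0]
      set h : V x := g (δf - (f x (v n) - f x 0)) with hh
      have hhnorm : ‖h‖ ≤ C₁ * e n := hg2 _
      have hhδ : ‖h‖ ≤ C₁ * ‖δf‖ :=
        hhnorm.trans (by nlinarith)
      have hvn1 : ‖v (n + 1)‖ ≤ 2 * C₁ * ‖δf‖ * (1 - (1 / 2) ^ (n + 1)) := by
        rw [hvs n, ← hh]
        refine (norm_add_le _ _).trans ?_
        have : ‖v n‖ + ‖h‖ ≤ 2 * C₁ * ‖δf‖ * (1 - (1/2)^n) + C₁ * (‖δf‖ * (1/2)^n) := by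
          have := hhnorm.trans (by nlinarith [hC₁.le, ihe] :
            C₁ * e n ≤ C₁ * (‖δf‖ * (1/2)^n))
          linarith
        refine this.trans (le_of_eq ?_)
        ring
      refine ⟨?_, hvn1⟩
      -- membership of v n and v (n+1) in the ball
      have hmemn : v n ∈ Metric.ball (0 : V x) r := by
        rw [Metric.mem_ball, dist_zero_right]
        linarith
      have hmemn1 : v (n + 1) ∈ Metric.ball (0 : V x) r := by
        rw [Metric.mem_ball, dist_zero_right]
        have h0 : (0:ℝ) ≤ (1/2) ^ (n+1) := by positivity
        have hvn1' : ‖v (n + 1)‖ ≤ 2 * C₁ * ‖δf‖ := by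
          nlinarith [mul_nonneg (mul_nonneg (mul_nonneg (by norm_num : (0:ℝ) ≤ 2) hC₁.le)
            (norm_nonneg δf)) h0]
        linarith
      have hmem0 : (0 : V x) ∈ Metric.ball (0 : V x) r := by
        simpa using hr
      -- the key error estimate
      have hrewrite : δf - (f x (v (n + 1)) - f x 0) =
          -(f x (v n + h) - f x (v n) - Df x (v n) h)
            - ((Df x (v n)) h - (Df x 0) h) := by
        have hDf0 : Df x 0 h = δf - (f x (v n) - f x 0) := hg1 _
        rw [hvs n, ← hh, hDf0]
        abel
      have htaylor : ‖f x (v n + h) - f x (v n) - Df x (v n) h‖ ≤ C₂ * ‖h‖ ^ 2 := by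
        refine h2 x (v n) h hmemn ?_
        rw [← hvs n]; exact hmemn1
      have hlip : ‖Df x (v n) - Df x 0‖ ≤ C₃ * ‖v n‖ := by
        have := h3 x 0 (v n) hmem0 (by simpa using hmemn)
        simpa using this
      have hop : ‖(Df x (v n)) h - (Df x 0) h‖ ≤ C₃ * ‖v n‖ * ‖h‖ := by
        have h' : ‖(Df x (v n) - Df x 0) h‖ ≤ ‖Df x (v n) - Df x 0‖ * ‖h‖ :=
          (Df x (v n) - Df x 0).le_opNorm h
        rw [ContinuousLinearMap.sub_apply] at h'
        refine h'.trans ?_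
        exact mul_le_mul_of_nonneg_right hlip (norm_nonneg h)
      have hstep : e (n + 1) ≤ C₂ * ‖h‖ ^ 2 + C₃ * ‖v n‖ * ‖h‖ := by
        rw [he]
        simp only
        rw [hrewrite]
        refine (norm_sub_le _ _).trans ?_
        rw [norm_neg]
        exact add_le_add htaylor hop
      have hfinal : e (n + 1) ≤ (1 / 2) * e n := by
        refine hstep.trans ?_
        have he0 : 0 ≤ e n := norm_nonneg _
        have hh0 : 0 ≤ ‖h‖ := norm_nonneg _
        have hsq : ‖h‖ ^ 2 ≤ (C₁ * ‖δf‖) * (C₁ * e n) := by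
          rw [sq]
          exact mul_le_mul hhδ hhnorm hh0 (by positivity)
        have hb1 : C₂ * ‖h‖ ^ 2 ≤ C₂ * (C₁ * ‖δf‖ * (C₁ * e n)) :=
          mul_le_mul_of_nonneg_left hsq hC₂.le
        have hb2 : C₃ * ‖v n‖ * ‖h‖ ≤ C₃ * (2 * C₁ * ‖δf‖) * (C₁ * e n) := by
          refine mul_le_mul ?_ hhnorm hh0 (by positivity)
          exact mul_le_mul_of_nonneg_left hvn hC₃.le
        have hcomb : C₁ ^ 2 * (C₂ + 2 * C₃) * ‖δf‖ * e n ≤ 1 / 2 * e n :=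
          mul_le_mul_of_nonneg_right hδf2' he0
        linarith only [hb1, hb2, hcomb]
      refine hfinal.trans ?_
      have : (1 / 2 : ℝ) * e n ≤ (1 / 2) * (‖δf‖ * (1/2)^n) := by linarith
      refine this.trans (le_of_eq ?_)
      ring
  -- the sequence is Cauchy
  have hcauchy : CauchySeq v := by
    refine cauchySeq_of_le_geometric (1/2) (C₁ * ‖δf‖) (by norm_num) (fun n => ?_)
    rw [dist_eq_norm, hvs n]
    have : ‖v n - (v n + g (δf - (f x (v n) - f x 0)))‖ = ‖g (δf - (f x (v n) - f x 0))‖ := by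
      rw [← norm_neg]; congr 1; abel
    rw [this]
    refine (hg2 _).trans ?_
    have : C₁ * e n ≤ C₁ * (‖δf‖ * (1/2)^n) :=
      mul_le_mul_of_nonneg_left (key n).1 hC₁.le
    refine this.trans (le_of_eq ?_)
    ring
  obtain ⟨δx, hδx⟩ := cauchySeq_tendsto_of_complete hcauchy
  have hδxnorm : ‖δx‖ ≤ 2 * C₁ * ‖δf‖ := by
    refine le_of_tendsto hδx.norm (Filter.Eventually.of_forall fun n => ?_)
    have h0 : (0:ℝ) ≤ (1/2) ^ n := by positivity
    nlinarith [(key n).2, mul_nonneg (mul_nonneg (mul_nonneg (by norm_num : (0:ℝ) ≤ 2) hC₁.le)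
      (norm_nonneg δf)) h0]
  have hmem : δx ∈ Metric.ball (0 : V x) r := by
    rw [Metric.mem_ball, dist_zero_right]
    linarith
  refine ⟨δx, hmem, ?_, by linarith⟩
  -- f x (v n) - f x 0 tends to both f x δx - f x 0 and δf
  have hcont : ContinuousAt (f x) δx := (hdiff x δx hmem).continuousAt
  have t1 : Filter.Tendsto (fun n => f x (v n) - f x 0) Filter.atTop
      (nhds (f x δx - f x 0)) :=
    (hcont.tendsto.comp hδx).sub tendsto_const_nhds
  have t2 : Filter.Tendsto (fun n => f x (v n) - f x 0) Filter.atTop (nhds δf) := by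
    have hz : Filter.Tendsto (fun n => (f x (v n) - f x 0) - δf) Filter.atTop (nhds 0) := by
      rw [tendsto_zero_iff_norm_tendsto_zero]
      have hgeo : Filter.Tendsto (fun n : ℕ => ‖δf‖ * (1/2 : ℝ)^n) Filter.atTop (nhds 0) := by
        have := (tendsto_pow_atTop_nhds_zero_of_lt_one (by norm_num : (0:ℝ) ≤ 1/2)
          (by norm_num : (1/2 : ℝ) < 1)).const_mul ‖δf‖
        simpa using this
      refine squeeze_zero (fun n => norm_nonneg _) (fun n => ?_) hgeo
      rw [norm_sub_rev]
      exact (key n).1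
    have := hz.add_const δf
    simpa using this
  exact tendsto_nhds_unique t1 t2
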